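/- Let ℬ be an abelian category and let P and Q be properties of objects of ℬ satisfying: (i) every morphism from an object satisfying P to an object satisfying Q is zero; (ii) P and Q are each closed under subobjects (if there is a monomorphism X' → X and the property holds for X, it holds for X') and under finite biproducts; (iii) every monomorphism between objects satisfying P admits a retraction; (iv) every epimorphism between objects satisfying Q admits a section. Let S : 0 → A → B → C → 0 and S' : 0 → A' → B' → C' → 0 be short exact sequences with P(A), P(A'), Q(C), Q(C'). Suppose B' is a subquotient of the n-fold biproduct B^{⊕n} for some natural number n, i.e. there exist an object D, a monomorphism D → B^{⊕n} and an epimorphism D → B'. Then there exist a natural number k and morphisms φ₁, …, φ_k : A → A' and ψ₁, …, ψ_k : C' → C such that extClass(S') = Σ_{i=1}^{k} (ψ_i)^*((φ_i)_*(extClass(S))) in Ext¹(C', A'). -/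

import Mathlib

/-!
Let `g := m ≫ ⨁ S.g : D ⟶ C^{⊕n}`. The short exact sequence `T : 0 → ker g → D → coim g → 0` is
what `S^{⊕n}` induces on the subobject `D`: its components are morphisms `φᵢ : T ⟶ S`, and its
outer terms embed into `A^{⊕n}` and `C^{⊕n}`, so they satisfy `P` and `Q`. Naturality of the
extension class along the `φᵢ`, together with a retraction `r` of `ker g ↪ A^{⊕n}`, gives
`extClass T = ∑ (φᵢ.τ₃)^* (ιᵢ ≫ r)_* extClass S`. On the other side, `ker g ⟶ D ⟶ B' ⟶ C'` goes
from a `P`-object to a `Q`-object, hence vanishes, so `e` extends to a morphism `T ⟶ S'` whose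
third component is an epimorphism of `Q`-objects; a section of it carries `extClass T` to
`extClass S'`.
-/

universe w v u

open CategoryTheory CategoryTheory.Limits CategoryTheory.Abelian

attribute [local instance] CategoryTheory.Abelian.hasFiniteBiproducts

namespace CategoryTheory.ShortComplex.ShortExact

variable {C : Type u} [Category.{v} C] [Abelian C] [HasExt.{w} C] {T S S' : ShortComplex C}

lemma extClass_eq_of_comp_τ₃_eq_id (hT : T.ShortExact) (hS' : S'.ShortExact) (φ : T ⟶ S')
    (s : S'.X₃ ⟶ T.X₃) (hs : s ≫ φ.τ₃ = 𝟙 _) :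
    hS'.extClass =
      (Ext.mk₀ s).comp (hT.extClass.comp (Ext.mk₀ φ.τ₁) (add_zero 1)) (zero_add 1) := by
  rw [extClass_naturality hT hS' φ, Ext.mk₀_comp_mk₀_assoc, hs, Ext.mk₀_id_comp]

lemma extClass_eq_sum_of_sum_τ₁_comp_eq_id (hT : T.ShortExact) (hS : S.ShortExact)
    {ι : Type*} [Fintype ι] (φ : ι → (T ⟶ S)) (ρ : ι → (S.X₁ ⟶ T.X₁))
    (hρ : ∑ i, (φ i).τ₁ ≫ ρ i = 𝟙 _) :
    hT.extClass = ∑ i, (Ext.mk₀ (φ i).τ₃).comp (hS.extClass.comp (Ext.mk₀ (ρ i)) (add_zero 1))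
      (zero_add 1) := by
  conv_lhs => rw [← Ext.comp_mk₀_id hT.extClass, ← hρ, Ext.mk₀_sum, Ext.comp_sum]
  refine Finset.sum_congr rfl fun i _ => ?_
  rw [← Ext.mk₀_comp_mk₀, ← Ext.comp_assoc_of_third_deg_zero, extClass_naturality hT hS,
    Ext.comp_assoc_of_third_deg_zero]

lemma extClass_eq_sum_of_sum_τ₁_comp_eq_id_of_comp_τ₃_eq_id (hT : T.ShortExact)
    (hS : S.ShortExact) (hS' : S'.ShortExact) {ι : Type*} [Fintype ι] (φ : ι → (T ⟶ S))
    (ρ : ι → (S.X₁ ⟶ T.X₁)) (hρ : ∑ i, (φ i).τ₁ ≫ ρ i = 𝟙 _)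
    (ψ : T ⟶ S') (s : S'.X₃ ⟶ T.X₃) (hs : s ≫ ψ.τ₃ = 𝟙 _) :
    hS'.extClass = ∑ i, (Ext.mk₀ (s ≫ (φ i).τ₃)).comp
      (hS.extClass.comp (Ext.mk₀ (ρ i ≫ ψ.τ₁)) (add_zero 1)) (zero_add 1) := by
  rw [extClass_eq_of_comp_τ₃_eq_id hT hS' ψ s hs,
    extClass_eq_sum_of_sum_τ₁_comp_eq_id hT hS φ ρ hρ, Ext.sum_comp, Ext.comp_sum]
  simp only [Ext.comp_assoc_of_second_deg_zero, Ext.comp_assoc_of_third_deg_zero,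
    Ext.mk₀_comp_mk₀, Ext.mk₀_comp_mk₀_assoc]

end CategoryTheory.ShortComplex.ShortExact

namespace CategoryTheory.ShortComplex

variable {C : Type u} [Category.{v} C] [Abelian C]

lemma epi_τ₃_of_epi_τ₂ {T S : ShortComplex C} (φ : T ⟶ S) [Epi φ.τ₂] [Epi S.g] : Epi φ.τ₃ := by
  have : Epi (T.g ≫ φ.τ₃) := by rw [← φ.comm₂₃]; infer_instance
  exact epi_of_epi T.g φ.τ₃

lemma mono_biproduct_lift_τ₁ {ι : Type*} [Finite ι] {T S : ShortComplex C} (φ : ι → (T ⟶ S))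
    [Mono T.f] [Mono (biproduct.lift fun i => (φ i).τ₂)] :
    Mono (biproduct.lift fun i => (φ i).τ₁) := by
  have : biproduct.lift (fun i => (φ i).τ₁) ≫ biproduct.map (fun _ => S.f) =
      T.f ≫ biproduct.lift fun i => (φ i).τ₂ := by
    ext i
    simpa using (φ i).comm₁₂
  have : Mono (biproduct.lift (fun i => (φ i).τ₁) ≫ biproduct.map (fun _ => S.f)) := by
    rw [this]; infer_instance
  exact mono_of_mono _ (biproduct.map fun _ => S.f)

noncomputable def ShortExact.homOfMiddle {T S : ShortComplex C} (hT : T.ShortExact)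
    (hS : S.ShortExact) (e : T.X₂ ⟶ S.X₂) (he : T.f ≫ e ≫ S.g = 0) : T ⟶ S :=
  haveI := hS.mono_f
  haveI := hT.epi_g
  { τ₁ := hS.exact.lift (T.f ≫ e) (by rw [Category.assoc, he])
    τ₂ := e
    τ₃ := hT.exact.desc (e ≫ S.g) he }

noncomputable abbrev kernelCoimage {X Y : C} (g : X ⟶ Y) : ShortComplex C :=
  ShortComplex.mk (kernel.ι g) (Abelian.coimage.π g) (cokernel.condition _)

lemma kernelCoimage_shortExact {X Y : C} (g : X ⟶ Y) : (kernelCoimage g).ShortExact where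
  exact := exact_cokernel (kernel.ι g)

section Subquotient

variable {ι : Type*} [Finite ι] {S : ShortComplex C} (hS : S.ShortExact) {D : C}
  (m : D ⟶ ⨁ fun _ : ι => S.X₂)

noncomputable def kernelCoimageToComponent (i : ι) :
    kernelCoimage (m ≫ biproduct.map fun _ => S.g) ⟶ S :=
  (kernelCoimage_shortExact _).homOfMiddle hS (m ≫ biproduct.π _ i)
    (by rw [Category.assoc m, ← biproduct.map_π (fun _ => S.g) i, ← Category.assoc m,
      kernel.condition_assoc, zero_comp])

lemma mono_biproduct_lift_kernelCoimageToComponent_τ₁ [Mono m] :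
    Mono (biproduct.lift fun i => (kernelCoimageToComponent hS m i).τ₁) := by
  have : biproduct.lift (fun i => (kernelCoimageToComponent hS m i).τ₂) = m := by
    ext i
    simp [kernelCoimageToComponent, ShortExact.homOfMiddle]
  have : Mono (biproduct.lift fun i => (kernelCoimageToComponent hS m i).τ₂) := by
    rw [this]; infer_instance
  exact mono_biproduct_lift_τ₁ _

lemma mono_biproduct_lift_kernelCoimageToComponent_τ₃ :
    Mono (biproduct.lift fun i => (kernelCoimageToComponent hS m i).τ₃) := by
  have : biproduct.lift (fun i => (kernelCoimageToComponent hS m i).τ₃) =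
      Abelian.factorThruCoimage (m ≫ biproduct.map fun _ => S.g) := by
    rw [← cancel_epi (Abelian.coimage.π _), Abelian.coimage.fac]
    ext i
    rw [Category.assoc, biproduct.lift_π, ← (kernelCoimageToComponent hS m i).comm₂₃]
    simp [kernelCoimageToComponent, ShortExact.homOfMiddle]
  rw [this]
  infer_instance

end Subquotient

end CategoryTheory.ShortComplex

theorem extClass_eq_sum_pullback_pushout_general
    {ℬ : Type u} [Category.{v} ℬ] [Abelian ℬ] [HasExt.{w} ℬ]
    (P Q : ℬ → Prop)
    (hPQ : ∀ (X Y : ℬ), P X → Q Y → ∀ f : X ⟶ Y, f = 0)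
    (hPsub : ∀ (X' X : ℬ) (f : X' ⟶ X), Mono f → P X → P X')
    (hQsub : ∀ (X' X : ℬ) (f : X' ⟶ X), Mono f → Q X → Q X')
    (hPprod : ∀ (m : ℕ) (X : Fin m → ℬ), (∀ i, P (X i)) → P (⨁ X))
    (hQprod : ∀ (m : ℕ) (X : Fin m → ℬ), (∀ i, Q (X i)) → Q (⨁ X))
    (hPsplit : ∀ (X Y : ℬ) (f : X ⟶ Y), P X → P Y → Mono f → ∃ r : Y ⟶ X, f ≫ r = 𝟙 X)
    (hQsplit : ∀ (X Y : ℬ) (f : X ⟶ Y), Q X → Q Y → Epi f → ∃ s : Y ⟶ X, s ≫ f = 𝟙 Y)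
    {S S' : ShortComplex ℬ} (hS : S.ShortExact) (hS' : S'.ShortExact)
    (hA : P S.X₁) (hC : Q S.X₃) (hC' : Q S'.X₃)
    (n : ℕ) (D : ℬ) (m : D ⟶ ⨁ (fun _ : Fin n => S.X₂)) (hm : Mono m)
    (e : D ⟶ S'.X₂) (he : Epi e) :
    ∃ (k : ℕ) (φ : Fin k → (S.X₁ ⟶ S'.X₁)) (ψ : Fin k → (S'.X₃ ⟶ S.X₃)),
      hS'.extClass = ∑ i : Fin k,
        (Ext.mk₀ (ψ i)).comp ((hS.extClass).comp (Ext.mk₀ (φ i)) (add_zero 1))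
          (zero_add 1) := by
  have hT := ShortComplex.kernelCoimage_shortExact (m ≫ biproduct.map fun _ => S.g)
  let φ := ShortComplex.kernelCoimageToComponent hS m
  have hι := ShortComplex.mono_biproduct_lift_kernelCoimageToComponent_τ₁ hS m
  have hPA := hPprod n _ fun _ => hA
  have hPT := hPsub _ _ _ hι hPA
  have hQT := hQsub _ _ _ (ShortComplex.mono_biproduct_lift_kernelCoimageToComponent_τ₃ hS m)
    (hQprod n _ fun _ => hC)
  obtain ⟨r, hr⟩ := hPsplit _ _ _ hPT hPA hι
  let ψ := hT.homOfMiddle hS' e (hPQ _ _ hPT hC' _)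
  have : Epi ψ.τ₂ := he
  have := hS'.epi_g
  obtain ⟨s, hs⟩ := hQsplit _ _ ψ.τ₃ hQT hC' (ShortComplex.epi_τ₃_of_epi_τ₂ ψ)
  refine ⟨n, fun i => (biproduct.ι (fun _ => S.X₁) i ≫ r) ≫ ψ.τ₁, fun i => s ≫ (φ i).τ₃,
    hT.extClass_eq_sum_of_sum_τ₁_comp_eq_id_of_comp_τ₃_eq_id hS hS' φ _ ?_ ψ s hs⟩
  rw [← hr, biproduct.lift_eq, Preadditive.sum_comp]
  simp only [Category.assoc, φ]

/-- Main abstract result: let `ℬ` be an abelian category with classes of objects `P`, `Q`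
such that every morphism from a `P`-object to a `Q`-object is zero, `P` and `Q` are closed
under subobjects and finite biproducts, monomorphisms between `P`-objects split and
epimorphisms between `Q`-objects split. If `S : 0 → A → B → C → 0` and
`S' : 0 → A' → B' → C' → 0` are short exact with `P A`, `P A'`, `Q C`, `Q C'`, and `B'` is
a subquotient of `B^{⊕n}`, then the extension class of `S'` is a finite sum of classes
`ψᵢ^* (φᵢ)_* (extClass S)` with `φᵢ : A ⟶ A'` and `ψᵢ : C' ⟶ C`. -/
theorem extClass_eq_sum_pullback_pushout
    {ℬ : Type u} [Category.{v} ℬ] [Abelian ℬ] [HasExt.{w} ℬ]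
    (P Q : ℬ → Prop)
    (hPQ : ∀ (X Y : ℬ), P X → Q Y → ∀ f : X ⟶ Y, f = 0)
    (hPsub : ∀ (X' X : ℬ) (f : X' ⟶ X), Mono f → P X → P X')
    (hQsub : ∀ (X' X : ℬ) (f : X' ⟶ X), Mono f → Q X → Q X')
    (hPprod : ∀ (m : ℕ) (X : Fin m → ℬ), (∀ i, P (X i)) → P (⨁ X))
    (hQprod : ∀ (m : ℕ) (X : Fin m → ℬ), (∀ i, Q (X i)) → Q (⨁ X))
    (hPsplit : ∀ (X Y : ℬ) (f : X ⟶ Y), P X → P Y → Mono f → ∃ r : Y ⟶ X, f ≫ r = 𝟙 X)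
    (hQsplit : ∀ (X Y : ℬ) (f : X ⟶ Y), Q X → Q Y → Epi f → ∃ s : Y ⟶ X, s ≫ f = 𝟙 Y)
    {S S' : ShortComplex ℬ} (hS : S.ShortExact) (hS' : S'.ShortExact)
    (hA : P S.X₁) (hA' : P S'.X₁) (hC : Q S.X₃) (hC' : Q S'.X₃)
    (n : ℕ) (D : ℬ) (m : D ⟶ ⨁ (fun _ : Fin n => S.X₂)) (hm : Mono m)
    (e : D ⟶ S'.X₂) (he : Epi e) :
    ∃ (k : ℕ) (φ : Fin k → (S.X₁ ⟶ S'.X₁)) (ψ : Fin k → (S'.X₃ ⟶ S.X₃)),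
      hS'.extClass = ∑ i : Fin k,
        (Ext.mk₀ (ψ i)).comp ((hS.extClass).comp (Ext.mk₀ (φ i)) (add_zero 1))
          (zero_add 1) :=
  extClass_eq_sum_pullback_pushout_general P Q hPQ hPsub hQsub hPprod hQprod hPsplit hQsplit hS hS'
    hA hC hC' n D m hm e he
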